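/- arXiv:1212.6184 — 5 statements merged into one kernel-verified Lean document; each statement's English description precedes it below -/
import Mathlib

section
/- Let δ: 0 → X → Y → Z → 0 and η: 0 → X' → Y' → Z → 0 be short exact sequences in an abelian category A, connected by morphisms α: X → X' and β: Y → Y' making the diagram commute (with the identity on Z). Let Δ denote the induced short exact sequence 0 → X → Y ⊕ X' → Y' → 0 (with maps (-f, α) and (β, f')). Then for any object C, the sequence Hom(C, δ) is exact if and only if both Hom(C, η) and Hom(C, Δ) are exact. -/
/-!
STATEMENT 0 (Pushout lemma, covariant part).
Given short exact sequences δ: 0 → X → Y → Z → 0 and η: 0 → X' → Y' → Z → 0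
in an abelian category, connected by α : X → X', β : Y → Y' (identity on Z),
and Δ : 0 → X → Y ⊞ X' → Y' → 0 the induced short exact sequence, then for any
object C, Hom(C, δ) is exact iff both Hom(C, η) and Hom(C, Δ) are exact.
-/

open CategoryTheory CategoryTheory.Limits

/-- Exactness of the sequence `0 → Hom(C,X) → Hom(C,Y) → Hom(C,Z) → 0` obtained by
applying the covariant Hom functor `Hom(C,-)` to a short sequence `X ⟶ Y ⟶ Z`. -/
def HomCovExact {A : Type*} [Category A] [Abelian A] (C : A)
    {X Y Z : A} (f : X ⟶ Y) (g : Y ⟶ Z) : Prop :=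
  (∀ u : C ⟶ X, u ≫ f = 0 → u = 0) ∧
  (∀ v : C ⟶ Y, v ≫ g = 0 → ∃ u : C ⟶ X, u ≫ f = v) ∧
  (∀ w : C ⟶ Z, ∃ v : C ⟶ Y, v ≫ g = w)

/-- Left-exactness of covariant Hom: lifting through the mono of a short exact sequence. -/
lemma homCov_lift {A : Type*} [Category A] [Abelian A]
    {X Y Z : A} {f : X ⟶ Y} {g : Y ⟶ Z} {w : f ≫ g = 0}
    (h : (ShortComplex.mk f g w).ShortExact) {C : A} (v : C ⟶ Y) (hv : v ≫ g = 0) :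
    ∃ u : C ⟶ X, u ≫ f = v := by
  have := h.mono_f
  have hk := h.exact.fIsKernel
  obtain ⟨l, hl⟩ := KernelFork.IsLimit.lift' hk v hv
  exact ⟨l, hl⟩

theorem pushout_lemma_covariant {A : Type*} [Category A] [Abelian A]
    {X Y Z X' Y' : A}
    (f : X ⟶ Y) (g : Y ⟶ Z) (f' : X' ⟶ Y') (g' : Y' ⟶ Z)
    (α : X ⟶ X') (β : Y ⟶ Y')
    (wδ : f ≫ g = 0) (wη : f' ≫ g' = 0)
    (hδ : (ShortComplex.mk f g wδ).ShortExact)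
    (hη : (ShortComplex.mk f' g' wη).ShortExact)
    (hcomm₁ : f ≫ β = α ≫ f') (hcomm₂ : β ≫ g' = g)
    (C : A) :
    HomCovExact C f g ↔
      (HomCovExact C f' g' ∧
        HomCovExact C (biprod.lift (-f) α) (biprod.desc β f')) := by
  have hfm := hδ.mono_f
  have hf'm := hη.mono_f
  constructor
  · rintro ⟨h1, h2, h3⟩
    refine ⟨⟨?_, ?_, ?_⟩, ?_, ?_, ?_⟩
    · intro u hu
      rw [← cancel_mono f', zero_comp]; exact hu
    · intro v hv
      exact homCov_lift hη v hv
    · intro w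
      obtain ⟨v, hv⟩ := h3 w
      exact ⟨v ≫ β, by rw [Category.assoc, hcomm₂, hv]⟩
    · -- mono part for Δ
      intro u hu
      have h1' : u ≫ (-f) = 0 := by
        have := congrArg (· ≫ (biprod.fst : Y ⊞ X' ⟶ Y)) hu
        simpa using this
      have h2' : u ≫ f = 0 := by
        rw [Preadditive.comp_neg, neg_eq_zero] at h1'; exact h1'
      rw [← cancel_mono f, zero_comp]; exact h2'
    · -- middle exactness for Δ
      intro v hv
      obtain ⟨v₁, v₂, rfl⟩ : ∃ a b, v = biprod.lift a b :=
        ⟨v ≫ biprod.fst, v ≫ biprod.snd, by apply biprod.hom_ext <;> simp⟩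
      rw [biprod.lift_desc] at hv
      have hv₁g : v₁ ≫ g = 0 := by
        have hβ : v₁ ≫ β = -(v₂ ≫ f') := eq_neg_of_add_eq_zero_left hv
        calc v₁ ≫ g = (v₁ ≫ β) ≫ g' := by rw [Category.assoc, hcomm₂]
          _ = (-(v₂ ≫ f')) ≫ g' := by rw [hβ]
          _ = 0 := by rw [Preadditive.neg_comp, Category.assoc, wη, comp_zero, neg_zero]
      obtain ⟨u₀, hu₀⟩ := homCov_lift hδ v₁ hv₁g
      refine ⟨-u₀, ?_⟩
      apply biprod.hom_ext
      · simp [hu₀]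
      · simp only [Category.assoc, biprod.lift_snd]
        rw [← cancel_mono f']
        have : (-u₀) ≫ α ≫ f' = (-u₀) ≫ f ≫ β := by rw [← hcomm₁]
        rw [Category.assoc, this, Preadditive.neg_comp, ← Category.assoc, hu₀,
          neg_eq_iff_add_eq_zero]
        exact hv
    · -- surjectivity for Δ
      intro w
      obtain ⟨v₁, hv₁⟩ := h3 (w ≫ g')
      have h0 : (w - v₁ ≫ β) ≫ g' = 0 := by
        rw [Preadditive.sub_comp, Category.assoc, hcomm₂, hv₁, sub_self]
      obtain ⟨u', hu'⟩ := homCov_lift hη (w - v₁ ≫ β) h0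
      refine ⟨biprod.lift v₁ u', ?_⟩
      rw [biprod.lift_desc, hu']
      abel
  · rintro ⟨⟨_, _, hη3⟩, _, _, hΔ3⟩
    refine ⟨?_, ?_, ?_⟩
    · intro u hu
      rw [← cancel_mono f, zero_comp]; exact hu
    · intro v hv
      exact homCov_lift hδ v hv
    · intro w
      obtain ⟨w', hw'⟩ := hη3 w
      obtain ⟨v, hv⟩ := hΔ3 w'
      obtain ⟨v₁, v₂, rfl⟩ : ∃ a b, v = biprod.lift a b :=
        ⟨v ≫ biprod.fst, v ≫ biprod.snd, by apply biprod.hom_ext <;> simp⟩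
      rw [biprod.lift_desc] at hv
      refine ⟨v₁, ?_⟩
      calc v₁ ≫ g = (v₁ ≫ β) ≫ g' := by rw [Category.assoc, hcomm₂]
        _ = (w' - v₂ ≫ f') ≫ g' := by rw [eq_sub_of_add_eq hv]
        _ = w' ≫ g' := by
            rw [Preadditive.sub_comp, Category.assoc, wη, comp_zero, sub_zero]
        _ = w := hw'
end

section
/- Let δ, η, Δ be as in the push-out lemma setup. Then for any object C, the sequence Hom(δ, C) (contravariant Hom) is exact if and only if both Hom(η, C) and Hom(Δ, C) are exact. -/
/-!
STATEMENT 1 (Pushout lemma, contravariant part).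
With δ, η, Δ as in the pushout lemma setup, for any object C the sequence
Hom(δ, C) (contravariant Hom) is exact iff both Hom(η, C) and Hom(Δ, C) are exact.
-/

open CategoryTheory CategoryTheory.Limits

/-- Exactness of the sequence `0 → Hom(Z,C) → Hom(Y,C) → Hom(X,C) → 0` obtained by
applying the contravariant Hom functor `Hom(-,C)` to a short sequence `X ⟶ Y ⟶ Z`. -/
def HomContraExact {A : Type*} [Category A] [Abelian A] (C : A)
    {X Y Z : A} (f : X ⟶ Y) (g : Y ⟶ Z) : Prop :=
  (∀ u : Z ⟶ C, g ≫ u = 0 → u = 0) ∧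
  (∀ v : Y ⟶ C, f ≫ v = 0 → ∃ u : Z ⟶ C, g ≫ u = v) ∧
  (∀ w : X ⟶ C, ∃ v : Y ⟶ C, f ≫ v = w)

/-- For a short exact sequence, the first two conditions of `HomContraExact`
hold automatically; only the extension condition matters. -/
lemma homContraExact_of_shortExact {A : Type*} [Category A] [Abelian A] (C : A)
    {X Y Z : A} {f : X ⟶ Y} {g : Y ⟶ Z} {w : f ≫ g = 0}
    (h : (ShortComplex.mk f g w).ShortExact)
    (h3 : ∀ w' : X ⟶ C, ∃ v : Y ⟶ C, f ≫ v = w') : HomContraExact C f g := by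
  refine ⟨?_, ?_, h3⟩
  · intro u hu
    have : Epi g := h.epi_g
    exact zero_of_epi_comp g hu
  · intro v hv
    exact ⟨Cofork.IsColimit.desc h.gIsCokernel v (by simpa using hv),
      Cofork.IsColimit.π_desc h.gIsCokernel⟩

/-- The middle short sequence `X → Y ⊕ X' → Y'` is short exact. -/
lemma delta_shortExact {A : Type*} [Category A] [Abelian A]
    {X Y Z X' Y' : A}
    (f : X ⟶ Y) (g : Y ⟶ Z) (f' : X' ⟶ Y') (g' : Y' ⟶ Z)
    (α : X ⟶ X') (β : Y ⟶ Y')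
    (wδ : f ≫ g = 0) (wη : f' ≫ g' = 0)
    (hδ : (ShortComplex.mk f g wδ).ShortExact)
    (hη : (ShortComplex.mk f' g' wη).ShortExact)
    (hcomm₁ : f ≫ β = α ≫ f') (hcomm₂ : β ≫ g' = g) :
    (ShortComplex.mk (biprod.lift (-f) α) (biprod.desc β f')
      (by simp [hcomm₁])).ShortExact := by
  have hmf : Mono f := hδ.mono_f
  have hmf' : Mono f' := hη.mono_f
  have heg : Epi g := hδ.epi_g
  have heg' : Epi g' := hη.epi_g
  have hmono : Mono (biprod.lift (-f) α) := by
    have : Mono ((biprod.lift (-f) α) ≫ biprod.fst) := by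
      simpa using (inferInstance : Mono (-f))
    exact mono_of_mono _ biprod.fst
  have hepi : Epi (biprod.desc β f') := by
    apply Preadditive.epi_of_cancel_zero
    intro T t ht
    have h1 : β ≫ t = 0 := by simpa using biprod.inl ≫= ht
    have h2 : f' ≫ t = 0 := by simpa using biprod.inr ≫= ht
    -- t factors through g'
    set s : Z ⟶ T := Cofork.IsColimit.desc hη.gIsCokernel t (by simpa using h2) with hsdef
    have hs : g' ≫ s = t := Cofork.IsColimit.π_desc hη.gIsCokernel
    have : g ≫ s = 0 := by
      rw [← hcomm₂, Category.assoc]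
      rw [hs, h1]
    have hs0 : s = 0 := zero_of_epi_comp g this
    rw [← hs, hs0]
    simp
  have hker : IsLimit (KernelFork.ofι (biprod.lift (-f) α)
      (f := biprod.desc β f') (by simp [hcomm₁])) := by
    refine KernelFork.IsLimit.ofι' _ _ (fun {T} t ht => ?_)
    set t₁ : T ⟶ Y := t ≫ biprod.fst with ht₁
    set t₂ : T ⟶ X' := t ≫ biprod.snd with ht₂
    have hteq : t = biprod.lift t₁ t₂ := by ext <;> simp [ht₁, ht₂]
    have hcond : t₁ ≫ β + t₂ ≫ f' = 0 := by
      rw [hteq] at ht; simpa [biprod.lift_desc] using ht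
    have haux : t₁ ≫ β = -(t₂ ≫ f') := by
      rw [eq_neg_iff_add_eq_zero]; exact hcond
    have h1g : t₁ ≫ g = 0 := by
      rw [← hcomm₂, ← Category.assoc, haux]
      simp [Category.assoc, wη]
    obtain ⟨s, hs⟩ := KernelFork.IsLimit.lift' hδ.fIsKernel t₁ (by simpa using h1g)
    simp only [Fork.ι_ofι] at hs
    have h2eq : t₂ = -(s ≫ α) := by
      rw [← cancel_mono f']
      have h2f : t₂ ≫ f' = -(t₁ ≫ β) := by
        rw [eq_neg_iff_add_eq_zero, add_comm]; exact hcond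
      rw [h2f, ← hs, Category.assoc, hcomm₁]; simp
    refine ⟨-s, ?_⟩
    rw [hteq]; ext
    · simp [← hs]
    · simp [h2eq]
  haveI := hmono; haveI := hepi
  exact ⟨(ShortComplex.mk (biprod.lift (-f) α) (biprod.desc β f')
      (by simp [hcomm₁])).exact_of_f_is_kernel hker⟩

theorem pushout_lemma_contravariant {A : Type*} [Category A] [Abelian A]
    {X Y Z X' Y' : A}
    (f : X ⟶ Y) (g : Y ⟶ Z) (f' : X' ⟶ Y') (g' : Y' ⟶ Z)
    (α : X ⟶ X') (β : Y ⟶ Y')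
    (wδ : f ≫ g = 0) (wη : f' ≫ g' = 0)
    (hδ : (ShortComplex.mk f g wδ).ShortExact)
    (hη : (ShortComplex.mk f' g' wη).ShortExact)
    (hcomm₁ : f ≫ β = α ≫ f') (hcomm₂ : β ≫ g' = g)
    (C : A) :
    HomContraExact C f g ↔
      (HomContraExact C f' g' ∧
        HomContraExact C (biprod.lift (-f) α) (biprod.desc β f')) := by
  have hΔ := delta_shortExact f g f' g' α β wδ wη hδ hη hcomm₁ hcomm₂
  constructor
  · rintro ⟨-, -, h3⟩
    constructor
    · refine homContraExact_of_shortExact C hη (fun w' => ?_)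
      obtain ⟨v, hv⟩ := h3 (α ≫ w')
      have hzero : biprod.lift (-f) α ≫ biprod.desc v w' = 0 := by
        simp [hv]
      set v' : Y' ⟶ C := Cofork.IsColimit.desc hΔ.gIsCokernel (biprod.desc v w')
          (by simpa using hzero) with hv'def
      have hv' : biprod.desc β f' ≫ v' = biprod.desc v w' :=
        Cofork.IsColimit.π_desc hΔ.gIsCokernel
      refine ⟨v', ?_⟩
      have := biprod.inr ≫= hv'
      simpa using this
    · refine homContraExact_of_shortExact C hΔ (fun w => ?_)
      obtain ⟨v, hv⟩ := h3 w
      exact ⟨biprod.desc (-v) 0, by simp [hv]⟩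
  · rintro ⟨⟨-, -, hη3⟩, ⟨-, -, hΔ3⟩⟩
    refine homContraExact_of_shortExact C hδ (fun w => ?_)
    obtain ⟨V, hV⟩ := hΔ3 w
    obtain ⟨u, hu⟩ := hη3 (biprod.inr ≫ V)
    refine ⟨-(biprod.inl ≫ V) + β ≫ u, ?_⟩
    have h1 : f ≫ β ≫ u = α ≫ biprod.inr ≫ V := by
      rw [← Category.assoc, hcomm₁, Category.assoc, hu]
    have h2 : (-f) ≫ biprod.inl ≫ V + α ≫ biprod.inr ≫ V = w := by
      simpa [biprod.lift_eq] using hV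
    calc f ≫ (-(biprod.inl ≫ V) + β ≫ u)
        = (-f) ≫ biprod.inl ≫ V + f ≫ β ≫ u := by
          simp [Preadditive.comp_add, Preadditive.comp_neg]
      _ = w := by rw [h1]; exact h2
end

section
/- Let Λ be an Artin algebra, E a generator of Λ-mod, and Γ = (End_Λ E)^op. Then Hom_Λ(E, -) induces an equivalence between G(E) (the category of Λ-modules admitting complete add E-resolutions) and the category GP(Γ) of Gorenstein-projective Γ-modules. -/
set_option linter.unusedVariables false

/-!
STATEMENT 5.
Let Λ be an Artin algebra, E a generator of Λ-mod, Γ = (End_Λ E)^op.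
Then Hom_Λ(E, -) induces an equivalence between G(E) (the Λ-modules admitting
complete add E-resolutions) and the category GP(Γ) of finitely generated
Gorenstein-projective Γ-modules.
-/

open CategoryTheory CategoryTheory.Limits

section GorensteinGeneral

variable {A : Type*} [Category A] [Abelian A]

/-- `Hom(C', X•)` is exact for every `C'` satisfying `P`. -/
def CExact (P : A → Prop) (X : CochainComplex A ℤ) : Prop :=
  ∀ C : A, P C → ∀ (n : ℤ) (g : C ⟶ X.X n), g ≫ X.d n (n + 1) = 0 →
    ∃ f : C ⟶ X.X (n - 1), f ≫ X.d (n - 1) n = g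

/-- `Hom(X•, C')` is exact for every `C'` satisfying `P`. -/
def CCoexact (P : A → Prop) (X : CochainComplex A ℤ) : Prop :=
  ∀ C : A, P C → ∀ (n : ℤ) (g : X.X n ⟶ C), X.d (n - 1) n ≫ g = 0 →
    ∃ f : X.X (n + 1) ⟶ C, X.d n (n + 1) ≫ f = g

/-- `X•` is a complete `C`-resolution of `L`. -/
structure IsCompleteResolution (P : A → Prop) (X : CochainComplex A ℤ) (L : A) : Prop where
  exact : ∀ n, X.ExactAt n
  mem : ∀ n, P (X.X n)
  cexact : CExact P X
  ccoexact : CCoexact P X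
  im : Nonempty (L ≅ Limits.image (X.d 0 1))

/-- `G(C)`: objects admitting a complete `C`-resolution. -/
def GClass (P : A → Prop) : A → Prop :=
  fun L => ∃ X : CochainComplex A ℤ, IsCompleteResolution P X L

end GorensteinGeneral

/-- A finitely generated Gorenstein-projective module over a ring `S`. -/
def GPfg (S : Type*) [Ring S] (M : ModuleCat S) : Prop :=
  Module.Finite S M ∧ GClass (fun C : ModuleCat S => Projective C ∧ Module.Finite S C) M

variable (Λ : Type*) [Ring Λ] (E : ModuleCat Λ)

/-- `M ∈ add E`. -/
def InAdd (M : ModuleCat Λ) : Prop :=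
  ∃ (n : ℕ) (s : M ⟶ ModuleCat.of Λ (Fin n → E)) (r : ModuleCat.of Λ (Fin n → E) ⟶ M),
    s ≫ r = 𝟙 M

/-- `Hom_Λ(E, X)` as a left `(End_Λ E)ᵐᵒᵖ`-module via precomposition. -/
instance endOpModule (X : ModuleCat Λ) :
    Module (Module.End Λ E)ᵐᵒᵖ (E →ₗ[Λ] X) where
  smul φ f := f ∘ₗ φ.unop
  one_smul f := LinearMap.ext fun _ => rfl
  mul_smul a b f := LinearMap.ext fun _ => rfl
  smul_zero a := LinearMap.ext fun _ => rfl
  smul_add a f g := LinearMap.ext fun _ => rfl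
  add_smul a b f := LinearMap.ext fun x => f.map_add _ _
  zero_smul f := LinearMap.ext fun x => f.map_zero

/-- The functor `Hom_Λ(E, -) : Λ-Mod ⥤ Γ-Mod`, `Γ = (End_Λ E)ᵐᵒᵖ`. -/
def homEFunctor : ModuleCat Λ ⥤ ModuleCat (Module.End Λ E)ᵐᵒᵖ where
  obj X := ModuleCat.of _ (E →ₗ[Λ] X)
  map {X Y} g :=
    ModuleCat.ofHom
    { toFun := fun f => g.hom ∘ₗ f
      map_add' := fun f₁ f₂ => LinearMap.ext fun x => g.hom.map_add _ _
      map_smul' := fun a f => LinearMap.ext fun _ => rfl }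
  map_id X := rfl
  map_comp g h := rfl


/-!
Because `E` generates, `1 = ∑ ρᵢ(xᵢ)` for some `xᵢ ∈ E` and `ρᵢ : E → Λ`, so every `m ∈ M` is
`∑ (m̂ ∘ ρᵢ)(xᵢ)`, where `m̂ : Λ → M` is `λ ↦ λ • m`; this makes `Hom_Λ(E, -)` fully faithful on
all of `Λ`-Mod. As `Hom_Λ(E, Eᵏ) ≅ Γᵏ` and idempotents split, it matches `add E` with the finitely
generated projective `Γ`-modules. Hence a complex in `add E` satisfies the two `Hom`-exactness
conditions iff its image under `Hom_Λ(E, -)` does, and every complex of finitely generated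
projective `Γ`-modules is such an image up to isomorphism. Exactness is `Hom`-exactness against
`Λ ∈ add E`, resp. `Γ`, and `Hom_Λ(E, -)` maps `Im d⁰` onto `Im Hom(E, d⁰)` because maps from `E`
into `Im d⁰` lift to `X⁰`.
-/

section CompleteResolution

variable {A : Type*} [Category A] [Abelian A] {P : A → Prop} {X Y : CochainComplex A ℤ}

theorem CExact.lift (h : CExact P X) {C : A} (hC : P C) {i j k : ℤ} (hij : i + 1 = j)
    (hjk : j + 1 = k) (g : C ⟶ X.X j) (hg : g ≫ X.d j k = 0) :
    ∃ f : C ⟶ X.X i, f ≫ X.d i j = g := by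
  obtain rfl : i = j - 1 := by omega
  subst hjk
  exact h C hC j g hg

theorem CExact.of_iso (h : CExact P X) (e : X ≅ Y) : CExact P Y := by
  intro C hC n g hg
  obtain ⟨f, hf⟩ := h C hC n (g ≫ e.inv.f n) (by simp [reassoc_of% hg])
  exact ⟨f ≫ e.hom.f (n - 1), by simp [reassoc_of% hf]⟩

theorem CCoexact.of_iso (h : CCoexact P X) (e : X ≅ Y) : CCoexact P Y := by
  intro C hC n g hg
  obtain ⟨f, hf⟩ := h C hC n (e.hom.f n ≫ g) (by rw [← e.hom.comm_assoc, hg, comp_zero])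
  exact ⟨e.inv.f (n + 1) ≫ f, by rw [← e.inv.comm_assoc, hf]; simp⟩

noncomputable def imageIsoOfComplexIso (e : X ≅ Y) (i j : ℤ) :
    image (X.d i j) ≅ image (Y.d i j) :=
  image.isoStrongEpiMono (f := Y.d i j) (e.inv.f i ≫ factorThruImage (X.d i j))
    (image.ι _ ≫ e.hom.f j) (by simp)

theorem IsCompleteResolution.of_iso {L : A} (h : IsCompleteResolution P X L) (e : X ≅ Y)
    (hmem : ∀ n, P (Y.X n)) : IsCompleteResolution P Y L where
  exact n := (h.exact n).of_iso e
  mem := hmem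
  cexact := h.cexact.of_iso e
  ccoexact := h.ccoexact.of_iso e
  im := ⟨h.im.some ≪≫ imageIsoOfComplexIso e 0 1⟩

end CompleteResolution

namespace CategoryTheory.Functor.FullyFaithful

variable {A B : Type*} [Category A] [Category B] {F : A ⥤ B}

theorem exists_iso_of_retract [IsIdempotentComplete A] (hF : F.FullyFaithful) {Z : A} {C' : B}
    (h : Retract C' (F.obj Z)) : ∃ M, Nonempty (Retract M Z) ∧ Nonempty (F.obj M ≅ C') := by
  let p := hF.preimage (h.r ≫ h.i)
  obtain ⟨M, i, q, hiq, hqi⟩ :=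
    IsIdempotentComplete.idempotents_split Z p (hF.map_injective (by simp [p]))
  have hqi' : F.map q ≫ F.map i = h.r ≫ h.i := by rw [← F.map_comp, hqi, hF.map_preimage]
  refine ⟨M, ⟨⟨i, q, hiq⟩⟩, ⟨⟨F.map i ≫ h.r, h.i ≫ F.map q, ?_, ?_⟩⟩⟩
  · rw [Category.assoc, ← reassoc_of% hqi', ← F.map_comp_assoc, hiq, F.map_id,
      Category.id_comp, ← F.map_comp, hiq, F.map_id]
  · rw [Category.assoc, reassoc_of% hqi']
    simp

theorem exists_mapHomologicalComplex_iso [HasZeroMorphisms A] [HasZeroMorphisms B]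
    [F.PreservesZeroMorphisms] (hF : F.FullyFaithful) {P : A → Prop} {Q : CochainComplex B ℤ}
    (hQ : ∀ n, ∃ M, P M ∧ Nonempty (F.obj M ≅ Q.X n)) :
    ∃ K : CochainComplex A ℤ, (∀ n, P (K.X n)) ∧
      Nonempty ((F.mapHomologicalComplex _).obj K ≅ Q) := by
  choose M hM ψ using hQ
  let δ n : M n ⟶ M (n + 1) :=
    hF.preimage ((ψ n).some.hom ≫ Q.d n (n + 1) ≫ (ψ (n + 1)).some.inv)
  have hδ n : δ n ≫ δ (n + 1) = 0 := hF.map_injective (by simp [δ])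
  refine ⟨CochainComplex.of M δ hδ, hM,
    ⟨HomologicalComplex.Hom.isoOfComponents (fun n => (ψ n).some) ?_⟩⟩
  rintro i _ rfl
  change (ψ i).some.hom ≫ Q.d i (i + 1) =
    F.map ((CochainComplex.of M δ hδ).d i (i + 1)) ≫ (ψ (i + 1)).some.hom
  rw [show (CochainComplex.of M δ hδ).d i (i + 1) = δ i from CochainComplex.of_d M δ i,
    hF.map_preimage]
  simp

end CategoryTheory.Functor.FullyFaithful

section FullyFaithful

variable {A B : Type*} [Category A] [Abelian A] [Category B] [Abelian B] {F : A ⥤ B}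
  [F.PreservesZeroMorphisms] {P : A → Prop} {P' : B → Prop} {X : CochainComplex A ℤ}

theorem CExact.map (hF : F.FullyFaithful) (h : CExact P X)
    (hP' : ∀ C', P' C' → ∃ C, P C ∧ Nonempty (F.obj C ≅ C')) :
    CExact P' ((F.mapHomologicalComplex _).obj X) := by
  intro C' hC' n (g : C' ⟶ F.obj (X.X n)) (hg : g ≫ F.map (X.d n (n + 1)) = 0)
  obtain ⟨C, hC, ⟨θ⟩⟩ := hP' C' hC'
  obtain ⟨f, hf⟩ := h C hC n (hF.preimage (θ.hom ≫ g)) <| hF.map_injective <| by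
    rw [F.map_comp, hF.map_preimage, Category.assoc, hg, comp_zero, F.map_zero]
  refine ⟨θ.inv ≫ F.map f, ?_⟩
  change (θ.inv ≫ F.map f) ≫ F.map (X.d (n - 1) n) = g
  rw [Category.assoc, ← F.map_comp, hf, hF.map_preimage, Iso.inv_hom_id_assoc]

theorem CCoexact.map (hF : F.FullyFaithful) (h : CCoexact P X)
    (hP' : ∀ C', P' C' → ∃ C, P C ∧ Nonempty (F.obj C ≅ C')) :
    CCoexact P' ((F.mapHomologicalComplex _).obj X) := by
  intro C' hC' n (g : F.obj (X.X n) ⟶ C') (hg : F.map (X.d (n - 1) n) ≫ g = 0)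
  obtain ⟨C, hC, ⟨θ⟩⟩ := hP' C' hC'
  obtain ⟨f, hf⟩ := h C hC n (hF.preimage (g ≫ θ.inv)) <| hF.map_injective <| by
    rw [F.map_comp, hF.map_preimage, reassoc_of% hg, zero_comp, F.map_zero]
  refine ⟨F.map f ≫ θ.hom, ?_⟩
  change F.map (X.d n (n + 1)) ≫ F.map f ≫ θ.hom = g
  rw [← F.map_comp_assoc, hf, hF.map_preimage, Category.assoc, Iso.inv_hom_id,
    Category.comp_id]

theorem CExact.of_map (hF : F.FullyFaithful) (h : CExact P' ((F.mapHomologicalComplex _).obj X))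
    (hP : ∀ C, P C → P' (F.obj C)) : CExact P X := by
  intro C hC n g hg
  obtain ⟨f, hf⟩ : ∃ f : F.obj C ⟶ F.obj (X.X (n - 1)), f ≫ F.map (X.d (n - 1) n) = F.map g :=
    h _ (hP C hC) n (F.map g) (by
      change F.map g ≫ F.map (X.d n (n + 1)) = 0
      rw [← F.map_comp, hg, F.map_zero])
  refine ⟨hF.preimage f, hF.map_injective ?_⟩
  rw [F.map_comp, hF.map_preimage, hf]

theorem CCoexact.of_map (hF : F.FullyFaithful)
    (h : CCoexact P' ((F.mapHomologicalComplex _).obj X)) (hP : ∀ C, P C → P' (F.obj C)) :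
    CCoexact P X := by
  intro C hC n g hg
  obtain ⟨f, hf⟩ : ∃ f : F.obj (X.X (n + 1)) ⟶ F.obj C, F.map (X.d n (n + 1)) ≫ f = F.map g :=
    h _ (hP C hC) n (F.map g) (by
      change F.map (X.d (n - 1) n) ≫ F.map g = 0
      rw [← F.map_comp, hg, F.map_zero])
  refine ⟨hF.preimage f, hF.map_injective ?_⟩
  rw [F.map_comp, hF.map_preimage, hf]

end FullyFaithful

section ModuleCat

universe u

variable {S : Type u} [Ring S] {P : ModuleCat.{u} S → Prop}
  {X : CochainComplex (ModuleCat.{u} S) ℤ}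

theorem CExact.exactAt (h : CExact P X) (hS : P (ModuleCat.of S S)) (n : ℤ) : X.ExactAt n := by
  rw [X.exactAt_iff' (n - 1) n (n + 1) (by simp) (by simp), ShortComplex.moduleCat_exact_iff]
  intro x hx
  obtain ⟨f, hf⟩ := h _ hS n (ModuleCat.ofHom (LinearMap.toSpanSingleton S _ x)) (by
    ext
    change X.d n (n + 1) ((1 : S) • x) = 0
    rw [one_smul]
    exact hx)
  refine ⟨f 1, ?_⟩
  change (f ≫ X.d (n - 1) n) 1 = x
  rw [hf]
  exact one_smul S x

theorem IsCompleteResolution.finite {L : ModuleCat.{u} S} (h : IsCompleteResolution P X L)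
    (hP : ∀ C, P C → Module.Finite S C) : Module.Finite S L :=
  have := hP _ (h.mem 0)
  have : Module.Finite S (image (X.d 0 1) : ModuleCat S) :=
    .of_surjective (factorThruImage (X.d 0 1)).hom
      ((ModuleCat.epi_iff_surjective _).1 inferInstance)
  .equiv h.im.some.toLinearEquiv.symm

end ModuleCat

abbrev IsFGProjective (S : Type*) [Ring S] (C : ModuleCat S) : Prop :=
  Projective C ∧ Module.Finite S C

instance homEFunctor_additive {Λ : Type*} [Ring Λ] (E : ModuleCat Λ) :
    (homEFunctor Λ E).Additive where
  map_add := rfl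

instance homEFunctor_preservesMonomorphisms {Λ : Type*} [Ring Λ] (E : ModuleCat Λ) :
    (homEFunctor Λ E).PreservesMonomorphisms where
  preserves f _ := (ModuleCat.mono_iff_injective _).2 fun a b h =>
    LinearMap.ext fun e => (ModuleCat.mono_iff_injective f).1 ‹_› (LinearMap.congr_fun h e)

section HomE

universe u

variable {Λ : Type u} [Ring Λ] {E : ModuleCat.{u} Λ}

local notation "Γ" => (Module.End Λ E)ᵐᵒᵖ

theorem InAdd.exists_sum_eq_one (h : InAdd Λ E (ModuleCat.of Λ Λ)) :
    ∃ (k : ℕ) (x : Fin k → E) (ρ : Fin k → E →ₗ[Λ] Λ), ∑ i, ρ i (x i) = 1 := by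
  obtain ⟨k, s, r, hsr⟩ := h
  refine ⟨k, s 1, fun i => r.hom ∘ₗ LinearMap.single Λ (fun _ : Fin k => (E : Type u)) i, ?_⟩
  simp only [LinearMap.comp_apply, ← map_sum, LinearMap.single_apply, Finset.univ_sum_single]
  exact ConcreteCategory.congr_hom hsr 1

theorem inAdd_self : InAdd Λ E E :=
  ⟨1, ModuleCat.ofHom (LinearMap.pi fun _ => .id), ModuleCat.ofHom (LinearMap.proj 0), rfl⟩

variable {k : ℕ} {x : Fin k → E} {ρ : Fin k → E →ₗ[Λ] Λ} {M N : ModuleCat.{u} Λ}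

theorem map_comp_end (φ : (E →ₗ[Λ] M) →ₗ[Γ] (E →ₗ[Λ] N)) (f : E →ₗ[Λ] M)
    (α : Module.End Λ E) : φ (f ∘ₗ α) = φ f ∘ₗ α :=
  φ.map_smul (MulOpposite.op α) f

theorem sum_smul_eq_self (hxρ : ∑ i, ρ i (x i) = 1) (m : M) : ∑ i, ρ i (x i) • m = m := by
  rw [← Finset.sum_smul, hxρ, one_smul]

/-- The inverse of `Hom_Λ(E, -)` on morphisms: as `m = ∑ (m̂ ∘ ρᵢ)(xᵢ)`, a map `h` with
`Hom(E, h) = φ` must send `m` to `∑ φ(m̂ ∘ ρᵢ)(xᵢ)`. -/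
def generatorLift (x : Fin k → E) (ρ : Fin k → E →ₗ[Λ] Λ)
    (φ : (E →ₗ[Λ] M) →ₗ[Γ] (E →ₗ[Λ] N)) : M →+ N where
  toFun m := ∑ i, φ (LinearMap.toSpanSingleton Λ M m ∘ₗ ρ i) (x i)
  map_zero' := by simp
  map_add' m m' := by
    simp [LinearMap.toSpanSingleton_add, LinearMap.add_comp, Finset.sum_add_distrib]

theorem generatorLift_apply (hxρ : ∑ i, ρ i (x i) = 1) (φ : (E →ₗ[Λ] M) →ₗ[Γ] (E →ₗ[Λ] N))
    (f : E →ₗ[Λ] M) (e : E) : generatorLift x ρ φ (f e) = φ f e := by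
  have hf i : LinearMap.toSpanSingleton Λ M (f e) ∘ₗ ρ i =
      f ∘ₗ LinearMap.toSpanSingleton Λ E e ∘ₗ ρ i := by
    ext; simp
  simp only [generatorLift, AddMonoidHom.coe_mk, ZeroHom.coe_mk, hf, map_comp_end,
    LinearMap.comp_apply, LinearMap.toSpanSingleton_apply]
  rw [← map_sum, sum_smul_eq_self hxρ]

theorem generatorLift_map_smul (hxρ : ∑ i, ρ i (x i) = 1)
    (φ : (E →ₗ[Λ] M) →ₗ[Γ] (E →ₗ[Λ] N)) (c : Λ) (m : M) :
    generatorLift x ρ φ (c • m) = c • generatorLift x ρ φ m := by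
  have hcm : c • m = ∑ i, (LinearMap.toSpanSingleton Λ M m ∘ₗ ρ i) (c • x i) := by
    simp [← Finset.smul_sum, sum_smul_eq_self hxρ]
  rw [hcm, map_sum]
  calc ∑ i, generatorLift x ρ φ ((LinearMap.toSpanSingleton Λ M m ∘ₗ ρ i) (c • x i))
      = ∑ i, c • φ (LinearMap.toSpanSingleton Λ M m ∘ₗ ρ i) (x i) :=
        Finset.sum_congr rfl fun i _ => by rw [generatorLift_apply hxρ, map_smul]
    _ = c • generatorLift x ρ φ m := Finset.smul_sum.symm

theorem LinearMap.ext_of_generator (hxρ : ∑ i, ρ i (x i) = 1) {g g' : M →ₗ[Λ] N}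
    (h : ∀ f : E →ₗ[Λ] M, g ∘ₗ f = g' ∘ₗ f) : g = g' := by
  ext m
  have hm : m = ∑ i, (LinearMap.toSpanSingleton Λ M m ∘ₗ ρ i) (x i) := by
    simp [sum_smul_eq_self hxρ]
  rw [hm, map_sum, map_sum]
  exact Finset.sum_congr rfl fun i _ => LinearMap.congr_fun (h _) (x i)

theorem homEFunctor_full (hgen : InAdd Λ E (ModuleCat.of Λ Λ)) :
    (homEFunctor.{u, u, u} Λ E).Full := by
  obtain ⟨k, x, ρ, hxρ⟩ := hgen.exists_sum_eq_one
  refine ⟨fun {M N} φ => ⟨ModuleCat.ofHom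
    { generatorLift x ρ φ.hom with map_smul' := generatorLift_map_smul hxρ φ.hom }, ?_⟩⟩
  ext f
  exact LinearMap.ext (generatorLift_apply hxρ φ.hom f)

theorem homEFunctor_faithful (hgen : InAdd Λ E (ModuleCat.of Λ Λ)) :
    (homEFunctor.{u, u, u} Λ E).Faithful := by
  obtain ⟨k, x, ρ, hxρ⟩ := hgen.exists_sum_eq_one
  exact ⟨fun {M N} g g' h => ModuleCat.hom_ext (LinearMap.ext_of_generator hxρ fun f =>
    congr(($h).hom f))⟩

noncomputable def homEFullyFaithful (hgen : InAdd Λ E (ModuleCat.of Λ Λ)) :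
    (homEFunctor.{u, u, u} Λ E).FullyFaithful :=
  have := homEFunctor_full hgen
  have := homEFunctor_faithful hgen
  .ofFullyFaithful _

def homEFunctorObjPiEquiv (k : ℕ) :
    (homEFunctor Λ E).obj (ModuleCat.of Λ (Fin k → E)) ≃ₗ[Γ] (Fin k → Γ) where
  toFun g i := .op (LinearMap.proj i ∘ₗ g)
  invFun v := LinearMap.pi fun i => (v i).unop
  map_add' _ _ := rfl
  map_smul' _ _ := rfl
  left_inv _ := rfl
  right_inv _ := rfl

theorem isFGProjective_homEFunctor_obj (hM : InAdd Λ E M) :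
    IsFGProjective Γ ((homEFunctor Λ E).obj M) := by
  obtain ⟨k, s, r, hsr⟩ := hM
  let R := (Retract.mk s r hsr).map (homEFunctor Λ E)
  have : Projective ((homEFunctor Λ E).obj (ModuleCat.of Λ (Fin k → E))) :=
    .of_iso (homEFunctorObjPiEquiv k).toModuleIso.symm inferInstance
  have : Module.Finite Γ ((homEFunctor Λ E).obj (ModuleCat.of Λ (Fin k → E))) :=
    .equiv (homEFunctorObjPiEquiv k).symm
  exact ⟨R.projective,
    .of_surjective R.r.hom fun y => ⟨R.i y, ConcreteCategory.congr_hom R.retract y⟩⟩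

theorem exists_inAdd_homEFunctor_obj_iso (hgen : InAdd Λ E (ModuleCat.of Λ Λ))
    {C : ModuleCat.{u} Γ} (hC : IsFGProjective Γ C) :
    ∃ M, InAdd Λ E M ∧ Nonempty ((homEFunctor Λ E).obj M ≅ C) := by
  obtain ⟨_, _⟩ := hC
  obtain ⟨k, f, g, -, -, hfg⟩ := Module.Finite.exists_comp_eq_id_of_projective Γ C
  let e := (homEFunctorObjPiEquiv (E := E) k).toModuleIso
  let R : Retract C ((homEFunctor Λ E).obj (ModuleCat.of Λ (Fin k → E))) :=
    ⟨ModuleCat.ofHom g ≫ e.inv, e.hom ≫ ModuleCat.ofHom f,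
      by ext c; simpa [e] using LinearMap.congr_fun hfg c⟩
  obtain ⟨M, ⟨R'⟩, hM⟩ := (homEFullyFaithful hgen).exists_iso_of_retract R
  exact ⟨M, ⟨k, R'.i, R'.r, R'.retract⟩, hM⟩

variable {K : CochainComplex (ModuleCat.{u} Λ) ℤ}

theorem epi_homEFunctor_map_factorThruImage (hK : CExact (InAdd Λ E) K) :
    Epi ((homEFunctor Λ E).map (factorThruImage (K.d 0 1))) := by
  rw [ModuleCat.epi_iff_surjective]
  intro y
  have hy : (ModuleCat.ofHom y ≫ image.ι (K.d 0 1)) ≫ K.d 1 2 = 0 := by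
    rw [Category.assoc, image_ι_comp_eq_zero (K.d_comp_d _ _ _), comp_zero]
  obtain ⟨f, hf⟩ := hK.lift (i := 0) inAdd_self (by norm_num) (by norm_num) _ hy
  have hfy : f ≫ factorThruImage (K.d 0 1) = ModuleCat.ofHom y := by
    rw [← cancel_mono (image.ι (K.d 0 1)), Category.assoc, image.fac, hf]
  exact ⟨f.hom, congr(($hfy).hom)⟩

noncomputable def homEImageIso (hK : CExact (InAdd Λ E) K) :
    (homEFunctor Λ E).obj (image (K.d 0 1)) ≅ image ((homEFunctor Λ E).map (K.d 0 1)) :=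
  have := epi_homEFunctor_map_factorThruImage hK
  have := strongEpi_of_epi ((homEFunctor Λ E).map (factorThruImage (K.d 0 1)))
  image.isoStrongEpiMono _ _ (by rw [← Functor.map_comp, image.fac])

theorem IsCompleteResolution.map_homEFunctor (hgen : InAdd Λ E (ModuleCat.of Λ Λ))
    {L : ModuleCat.{u} Λ} (h : IsCompleteResolution (InAdd Λ E) K L) :
    IsCompleteResolution (IsFGProjective Γ)
      (((homEFunctor Λ E).mapHomologicalComplex _).obj K) ((homEFunctor Λ E).obj L) := by
  have hF := homEFullyFaithful hgen
  have hcexact := h.cexact.map hF fun _ => exists_inAdd_homEFunctor_obj_iso hgen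
  exact
    { exact := hcexact.exactAt ⟨inferInstance, inferInstance⟩
      mem n := isFGProjective_homEFunctor_obj (h.mem n)
      cexact := hcexact
      ccoexact := h.ccoexact.map hF fun _ => exists_inAdd_homEFunctor_obj_iso hgen
      im := ⟨(homEFunctor Λ E).mapIso h.im.some ≪≫ homEImageIso h.cexact⟩ }

theorem IsCompleteResolution.of_map_homEFunctor (hgen : InAdd Λ E (ModuleCat.of Λ Λ))
    {Y : ModuleCat.{u} Γ} (hmem : ∀ n, InAdd Λ E (K.X n))
    (h : IsCompleteResolution (IsFGProjective Γ)
      (((homEFunctor Λ E).mapHomologicalComplex _).obj K) Y) :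
    IsCompleteResolution (InAdd Λ E) K (image (K.d 0 1)) ∧
      Nonempty ((homEFunctor Λ E).obj (image (K.d 0 1)) ≅ Y) := by
  have hF := homEFullyFaithful hgen
  have hcexact := h.cexact.of_map hF fun _ => isFGProjective_homEFunctor_obj
  refine ⟨{ exact := hcexact.exactAt hgen
            mem := hmem
            cexact := hcexact
            ccoexact := h.ccoexact.of_map hF fun _ => isFGProjective_homEFunctor_obj
            im := ⟨Iso.refl _⟩ }, ⟨homEImageIso hcexact ≪≫ h.im.some.symm⟩⟩

end HomE

theorem homE_equivalence_GE_GPGamma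
    (hgen : InAdd Λ E (ModuleCat.of Λ Λ)) :
    (∀ X : ModuleCat Λ, GClass (InAdd Λ E) X →
        GPfg (Module.End Λ E)ᵐᵒᵖ ((homEFunctor Λ E).obj X)) ∧
    (∀ Y : ModuleCat (Module.End Λ E)ᵐᵒᵖ, GPfg (Module.End Λ E)ᵐᵒᵖ Y →
        ∃ X : ModuleCat Λ, GClass (InAdd Λ E) X ∧
          Nonempty ((homEFunctor Λ E).obj X ≅ Y)) ∧
    (∀ X X' : ModuleCat Λ, GClass (InAdd Λ E) X → GClass (InAdd Λ E) X' →
        Function.Bijective (fun g : X ⟶ X' => (homEFunctor Λ E).map g)) := by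
  have hF := homEFullyFaithful hgen
  refine ⟨fun X ⟨K, hK⟩ => ?_, fun Y ⟨_, Q, hQ⟩ => ?_, fun X X' _ _ => hF.map_bijective X X'⟩
  · have hK' := hK.map_homEFunctor hgen
    exact ⟨hK'.finite fun _ hC => hC.2, _, hK'⟩
  · obtain ⟨K, hKmem, ⟨e⟩⟩ := hF.exists_mapHomologicalComplex_iso
      fun n => exists_inAdd_homEFunctor_obj_iso hgen (hQ.mem n)
    obtain ⟨hK, hY⟩ := (hQ.of_iso e.symm fun n => isFGProjective_homEFunctor_obj (hKmem n))
      |>.of_map_homEFunctor hgen hKmem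
    exact ⟨_, ⟨K, hK⟩, hY⟩
end

section
/- A full triangle functor between triangulated categories which sends non-zero objects to non-zero objects is faithful. -/
/-!
If `F.map f = 0` and `X ⟶ Y ⟶ Z ⟶ X⟦1⟧` is a distinguished triangle on `f` with second
morphism `g`, then `F.map g` is mono, hence split mono in the triangulated category `D`.
By fullness its retraction is `F.map r`, so `F.map (g ≫ r) = 𝟙`. A triangulated functor
reflecting zero objects reflects isomorphisms (look at the cone of `g ≫ r`), so `g ≫ r` is an
isomorphism; thus `g` is mono and `f = 0` since `f ≫ g = 0`. For additive functors, reflecting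
zero morphisms is faithfulness.
-/

open CategoryTheory CategoryTheory.Limits CategoryTheory.Pretriangulated

namespace CategoryTheory.Functor

section

variable {C D : Type*} [Category C] [Category D]

lemma mono_of_isSplitMono_map (F : C ⥤ D) [F.Full] [F.ReflectsIsomorphisms]
    {X Y : C} (g : X ⟶ Y) [IsSplitMono (F.map g)] : Mono g := by
  obtain ⟨r, hr⟩ := F.map_surjective (retraction (F.map g))
  have : IsIso (F.map (g ≫ r)) := by
    rw [F.map_comp, hr, IsSplitMono.id]
    infer_instance
  have : IsIso (g ≫ r) := isIso_of_reflects_iso (g ≫ r) F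
  exact mono_of_mono g r

lemma faithful_of_map_eq_zero [Preadditive C] [Preadditive D] (F : C ⥤ D) [F.Additive]
    (hF : ∀ {X Y : C} (f : X ⟶ Y), F.map f = 0 → f = 0) : F.Faithful where
  map_injective {_ _ f₁ f₂} h := sub_eq_zero.1 (hF _ (by rw [F.map_sub, h, sub_self]))

end

section Triangulated

variable {C D : Type*} [Category C] [Category D] [HasZeroObject C] [HasZeroObject D]
  [Preadditive C] [Preadditive D] [HasShift C ℤ] [HasShift D ℤ]
  [∀ n : ℤ, (shiftFunctor C n).Additive] [∀ n : ℤ, (shiftFunctor D n).Additive]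
  [Pretriangulated C] [Pretriangulated D] (F : C ⥤ D) [F.CommShift ℤ] [F.IsTriangulated]

lemma reflectsIsomorphisms_of_reflects_isZero (hF : ∀ X : C, IsZero (F.obj X) → IsZero X) :
    F.ReflectsIsomorphisms where
  reflects {_ _} f _ := by
    obtain ⟨Z, _, _, hT⟩ := distinguished_cocone_triangle f
    refine (Triangle.isZero₃_iff_isIso₁ _ hT).1 (hF Z ?_)
    exact Triangle.isZero₃_of_isIso₁ _ (F.map_distinguished _ hT)
      (inferInstanceAs (IsIso (F.map f)))

lemma eq_zero_of_map_eq_zero [F.Full] [F.ReflectsIsomorphisms] {X Y : C} (f : X ⟶ Y)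
    (hf : F.map f = 0) : f = 0 := by
  obtain ⟨_, g, _, hT⟩ := distinguished_cocone_triangle f
  have : Mono (F.map g) := Triangle.mono₂ _ (F.map_distinguished _ hT) hf
  have : IsSplitMono (F.map g) := isSplitMono_of_mono _
  have : Mono g := F.mono_of_isSplitMono_map g
  exact Triangle.mor₁_eq_zero_of_mono₂ _ hT this

end Triangulated

end CategoryTheory.Functor

theorem full_triangle_functor_faithful
    {C D : Type*} [Category C] [Category D]
    [HasZeroObject C] [HasZeroObject D]
    [Preadditive C] [Preadditive D]
    [HasShift C ℤ] [HasShift D ℤ]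
    [∀ n : ℤ, (shiftFunctor C n).Additive] [∀ n : ℤ, (shiftFunctor D n).Additive]
    [Pretriangulated C] [Pretriangulated D]
    (F : C ⥤ D) [F.CommShift ℤ] [F.IsTriangulated] [F.Full]
    (h : ∀ X : C, ¬ IsZero X → ¬ IsZero (F.obj X)) :
    F.Faithful := by
  have : F.ReflectsIsomorphisms :=
    F.reflectsIsomorphisms_of_reflects_isZero fun X hFX => not_not.1 fun hX => h X hX hFX
  exact F.faithful_of_map_eq_zero F.eq_zero_of_map_eq_zero
end

section
/- Let A be an abelian category with enough projectives. Let f•: P• → Q• be a null-homotopic chain map in K^{-,b}(P(A)), and suppose H^m(P•) = 0 = H^m(Q•) for all m ≤ n₀. Then the restriction of f^{n₀} to Ker d^{n₀}_{P•} → Ker d^{n₀}_{Q•} factors through a projective object. -/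
/-!
STATEMENT 13.
Let f•: P• → Q• be a null-homotopic chain map in K^{-,b}(P(A)) with
H^m(P•) = 0 = H^m(Q•) for all m ≤ n₀. Then the induced morphism
Ker d^{n₀}_{P•} → Ker d^{n₀}_{Q•} factors through a projective object.
-/

open CategoryTheory CategoryTheory.Limits ZeroObject

variable {A : Type*} [Category A] [Abelian A]

/-- Gorenstein-projective objects: those admitting a complete projective resolution. -/
def GPobj : A → Prop := GClass (fun C => Projective C)

/-- Upper bounded (bounded above) complex: `X^n = 0` for `n ≫ 0`. -/
def UBdd (X : CochainComplex A ℤ) : Prop := ∃ N : ℤ, ∀ n, N < n → Limits.IsZero (X.X n)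

/-- Bounded complex. -/
def Bdd (X : CochainComplex A ℤ) : Prop :=
  ∃ a b : ℤ, ∀ n, (n < a ∨ b < n) → Limits.IsZero (X.X n)

/-- Only finitely many non-zero cohomologies in the lower direction. -/
def CohBddBelow (X : CochainComplex A ℤ) : Prop := ∃ N : ℤ, ∀ n, n ≤ N → X.ExactAt n

/-- The defining condition of `K^{-,gpb}(GP(A))`: there is `N` such that
`H^n Hom(G, X•) = 0` for all `n ≤ N` and all Gorenstein-projective `G`. -/
def GpbVanish (X : CochainComplex A ℤ) : Prop :=
  ∃ N : ℤ, ∀ n, n ≤ N → ∀ G : A, GPobj G →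
    ∀ g : G ⟶ X.X n, g ≫ X.d n (n + 1) = 0 →
      ∃ f : G ⟶ X.X (n - 1), f ≫ X.d (n - 1) n = g

theorem nullhomotopic_restriction_factors_through_projective
    [CategoryTheory.EnoughProjectives A]
    (P Q : CochainComplex A ℤ)
    (hPproj : ∀ n, Projective (P.X n)) (hQproj : ∀ n, Projective (Q.X n))
    (hPub : UBdd P) (hQub : UBdd Q)
    (hPcb : CohBddBelow P) (hQcb : CohBddBelow Q)
    (f : P ⟶ Q) (hnull : Nonempty (Homotopy f 0))
    (n₀ : ℤ)
    (hP0 : ∀ m, m ≤ n₀ → P.ExactAt m) (hQ0 : ∀ m, m ≤ n₀ → Q.ExactAt m) :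
    ∃ (Pr : A) (_ : Projective Pr)
      (u : Limits.kernel (P.d n₀ (n₀ + 1)) ⟶ Pr)
      (v : Pr ⟶ Limits.kernel (Q.d n₀ (n₀ + 1))),
      u ≫ v =
        Limits.kernel.lift (Q.d n₀ (n₀ + 1))
          (Limits.kernel.ι (P.d n₀ (n₀ + 1)) ≫ f.f n₀)
          (by rw [Category.assoc, f.comm n₀ (n₀ + 1), ← Category.assoc,
                Limits.kernel.condition, Limits.zero_comp]) := by
  obtain ⟨h⟩ := hnull
  refine ⟨Q.X (n₀ - 1), hQproj _,
    Limits.kernel.ι (P.d n₀ (n₀ + 1)) ≫ h.hom n₀ (n₀ - 1),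
    Limits.kernel.lift _ (Q.d (n₀ - 1) n₀) (Q.d_comp_d _ _ _), ?_⟩
  apply Limits.equalizer.hom_ext
  simp only [Category.assoc, Limits.kernel.lift_ι]
  have hc := h.comm n₀
  rw [dNext_eq h.hom (show (ComplexShape.up ℤ).Rel n₀ (n₀ + 1) by simp),
    prevD_eq h.hom (show (ComplexShape.up ℤ).Rel (n₀ - 1) n₀ by simp)] at hc
  simp only [HomologicalComplex.zero_f_apply, add_zero] at hc
  rw [hc]
  simp [reassoc_of% Limits.kernel.condition (P.d n₀ (n₀ + 1))]
end
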